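/- For j ≥ 1, the words (01)^ℓ for 1 ≤ ℓ ≤ j are exactly the binary words with equally many 0's and 1's whose associated lattice path stays weakly below the x-axis, reaches minimum ordinate exactly -1, and which avoid the factor (10)^j1. -/
import Mathlib


/-- The pattern `(10)^j 1` (`true` = 1 / up step, `false` = 0 / down step). -/
def pat (j : ℕ) : List Bool := (List.replicate j [true, false]).flatten ++ [true]

/-- `(01)^ℓ`. -/
def alt' (ℓ : ℕ) : List Bool := (List.replicate ℓ [false, true]).flatten

def ht (w : List Bool) : ℤ := (w.count true : ℤ) - (w.count false : ℤ)

lemma ht_nil : ht [] = 0 := by simp [ht]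

lemma ht_cons_true (l : List Bool) : ht (true :: l) = 1 + ht l := by
  simp [ht, List.count_cons]; ring

lemma ht_cons_false (l : List Bool) : ht (false :: l) = -1 + ht l := by
  simp [ht, List.count_cons]; ring

lemma alt'_succ (ℓ : ℕ) : alt' (ℓ + 1) = false :: true :: alt' ℓ := by
  simp [alt', List.replicate_succ]

lemma pat_succ' (n : ℕ) : pat (n + 1) = pat n ++ [false, true] := by
  simp [pat, List.replicate_succ']

lemma length_alt' (ℓ : ℕ) : (alt' ℓ).length = 2 * ℓ := by
  induction ℓ with
  | zero => simp [alt']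
  | succ n ih => rw [alt'_succ]; simp [ih]; ring

lemma length_pat (j : ℕ) : (pat j).length = 2 * j + 1 := by
  induction j with
  | zero => simp [pat]
  | succ n ih => rw [pat_succ']; simp [ih]; ring

lemma alt'_eq_cons_pat (ℓ : ℕ) : alt' (ℓ + 1) = false :: pat ℓ := by
  induction ℓ with
  | zero => simp [alt', pat]
  | succ n ih =>
      rw [alt'_succ, ih]
      have : pat (n + 1) = true :: false :: pat n := by
        simp [pat, List.replicate_succ]
      rw [this]

lemma pat_prefix {j m : ℕ} (h : j ≤ m) : pat j <+: pat m := by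
  induction m with
  | zero =>
      have : j = 0 := Nat.le_zero.mp h
      subst this; exact List.prefix_refl _
  | succ n ih =>
      rcases Nat.lt_or_ge j (n + 1) with h' | h'
      · have := ih (Nat.lt_succ_iff.mp h')
        rw [pat_succ']
        exact this.trans (List.prefix_append _ _)
      · have : j = n + 1 := le_antisymm h h'
        subst this; exact List.prefix_refl _

lemma ht_alt' (ℓ : ℕ) : ht (alt' ℓ) = 0 := by
  induction ℓ with
  | zero => simp [alt', ht]
  | succ n ih => rw [alt'_succ, ht_cons_false, ht_cons_true, ih]; ring

lemma alt'_prefix_bounds : ∀ ℓ (p : List Bool), p <+: alt' ℓ → ht p ≤ 0 ∧ -1 ≤ ht p := by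
  intro ℓ
  induction ℓ with
  | zero =>
      intro p hp
      have : p = [] := List.prefix_nil.mp (by simpa [alt'] using hp)
      subst this; simp [ht_nil]
  | succ n ih =>
      intro p hp
      rw [alt'_succ] at hp
      rcases p with _ | ⟨a, p⟩
      · simp [ht_nil]
      · obtain ⟨rfl, hp2⟩ := List.cons_prefix_cons.mp hp
        rcases p with _ | ⟨b, p⟩
        · simp [ht_cons_false, ht_nil]
        · obtain ⟨rfl, hp3⟩ := List.cons_prefix_cons.mp hp2
          have := ih p hp3
          rw [ht_cons_false, ht_cons_true]
          omega

lemma key : ∀ n (w : List Bool), w.length = n → ht w = 0 →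
    (∀ p, p <+: w → ht p ≤ 0) → (∀ p, p <+: w → -1 ≤ ht p) →
    ∃ ℓ, w = alt' ℓ := by
  intro n
  induction n using Nat.strong_induction_on with
  | _ n ih =>
    intro w hlen h0 hle hge
    match w with
    | [] => exact ⟨0, by simp [alt']⟩
    | [a] =>
        exfalso
        cases a <;> simp [ht] at h0
    | a :: b :: t =>
        have ha : a = false := by
          have := hle [a] ⟨b :: t, rfl⟩
          cases a
          · rfl
          · rw [ht_cons_true, ht_nil] at this; omega
        subst ha
        have hb : b = true := by
          have := hge [false, b] ⟨t, rfl⟩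
          cases b
          · rw [ht_cons_false, ht_cons_false, ht_nil] at this; omega
          · rfl
        subst hb
        have h0' : ht t = 0 := by
          rw [ht_cons_false, ht_cons_true] at h0; omega
        have hle' : ∀ p, p <+: t → ht p ≤ 0 := by
          intro p hp
          have := hle (false :: true :: p) (by
            exact List.cons_prefix_cons.mpr ⟨rfl, List.cons_prefix_cons.mpr ⟨rfl, hp⟩⟩)
          rw [ht_cons_false, ht_cons_true] at this; omega
        have hge' : ∀ p, p <+: t → -1 ≤ ht p := by
          intro p hp
          have := hge (false :: true :: p) (by
            exact List.cons_prefix_cons.mpr ⟨rfl, List.cons_prefix_cons.mpr ⟨rfl, hp⟩⟩)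
          rw [ht_cons_false, ht_cons_true] at this; omega
        have hlt : t.length < n := by simp at hlen; omega
        obtain ⟨ℓ, hℓ⟩ := ih t.length hlt t rfl h0' hle' hge'
        exact ⟨ℓ + 1, by rw [alt'_succ, hℓ]⟩

theorem stmt5 (j : ℕ) (hj : 1 ≤ j) (w : List Bool) :
    (ht w = 0 ∧ (∀ p, p <+: w → ht p ≤ 0) ∧
      (∃ p, p <+: w ∧ ht p = -1) ∧ (∀ p, p <+: w → -1 ≤ ht p) ∧
      ¬ pat j <:+: w)
    ↔ ∃ ℓ, 1 ≤ ℓ ∧ ℓ ≤ j ∧ w = alt' ℓ := by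
  constructor
  · rintro ⟨h0, hle, ⟨q, hq, hq1⟩, hge, havoid⟩
    obtain ⟨ℓ, rfl⟩ := key w.length w rfl h0 hle hge
    have hℓ1 : 1 ≤ ℓ := by
      by_contra h
      have : ℓ = 0 := by omega
      subst this
      have : q = [] := List.prefix_nil.mp (by simpa [alt'] using hq)
      subst this
      rw [ht_nil] at hq1
      omega
    refine ⟨ℓ, hℓ1, ?_, rfl⟩
    by_contra h
    push_neg at h
    apply havoid
    obtain ⟨m, rfl⟩ : ∃ m, ℓ = m + 1 := ⟨ℓ - 1, by omega⟩
    rw [alt'_eq_cons_pat]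
    have hpre : pat j <+: pat m := pat_prefix (by omega)
    obtain ⟨t, ht'⟩ := hpre
    exact ⟨[false], t, by rw [← ht']; rfl⟩
  · rintro ⟨ℓ, h1, h2, rfl⟩
    refine ⟨ht_alt' ℓ, fun p hp => (alt'_prefix_bounds ℓ p hp).1, ?_,
      fun p hp => (alt'_prefix_bounds ℓ p hp).2, ?_⟩
    · obtain ⟨m, rfl⟩ : ∃ m, ℓ = m + 1 := ⟨ℓ - 1, by omega⟩
      refine ⟨[false], ?_, by rw [ht_cons_false, ht_nil]; ring⟩
      rw [alt'_succ]
      exact ⟨true :: alt' m, rfl⟩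
    · intro hinf
      have := hinf.length_le
      rw [length_pat, length_alt'] at this
      omega
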